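/- Let σ > 0 and for δ > 0 let g_σ and g_{σ+δ} be the densities of the centered normal distributions N(0, σ²) and N(0, (σ+δ)²). Then, as δ → 0⁺, (1/δ) · ∫_{−∞}^{∞} |g_σ(x) − g_{σ+δ}(x)| dx tends to √(8/(e·π·σ²)). Equivalently, ∫ |g_σ − g_{σ+δ}| = δ·√(8/(eπσ²)) + o(δ). -/

import Mathlib

open Real MeasureTheory Filter

/-- The centered Gaussian density with standard deviation `σ`. -/
noncomputable def gaussianDensity (σ : ℝ) (x : ℝ) : ℝ :=
  (σ * Real.sqrt (2 * π))⁻¹ * Real.exp (-(x ^ 2) / (2 * σ ^ 2))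

/-!
For `0 < s < t` the densities `g_s` and `g_t` cross exactly at `±c`, with
`c² = 2 s² t² log (t / s) / (t² - s²)`, and `g_s ≥ g_t` on `[-c, c]`. Both have mass one, so
`∫ |g_s - g_t|` is twice the excess of `g_s` over `g_t` on `[-c, c]`, which after rescaling is
`2 (Φ (c / s) - Φ (c / t))`, where `Φ r` is the standard normal mass of `[-r, r]`.
For `s = σ`, `t = σ + δ` and `δ → 0⁺` we have `c → σ` and `c / σ - c / (σ + δ) ∼ δ / σ`, so the
strict differentiability of `Φ` at `1`, with `Φ' 1 = 2 φ 1` for the standard normal density `φ`,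
gives the distance `δ · 4 φ 1 / σ + o(δ) = δ √(8 / (e π σ²)) + o(δ)`.
-/

open Topology Asymptotics ProbabilityTheory

theorem integral_abs_sub_eq_two_mul_setIntegral {α : Type*} [MeasurableSpace α] {μ : Measure α}
    {f g : α → ℝ} {s : Set α} (hs : MeasurableSet s) (hf : Integrable f μ) (hg : Integrable g μ)
    (hfg : ∫ x, f x ∂μ = ∫ x, g x ∂μ) (h_mem : ∀ x ∈ s, g x ≤ f x)
    (h_not_mem : ∀ x ∉ s, f x ≤ g x) :
    ∫ x, |f x - g x| ∂μ = 2 * ∫ x in s, (f x - g x) ∂μ := by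
  have h_in : ∫ x in s, |f x - g x| ∂μ = ∫ x in s, (f x - g x) ∂μ :=
    setIntegral_congr_fun hs fun x hx => abs_of_nonneg (sub_nonneg.2 (h_mem x hx))
  have h_out : ∫ x in sᶜ, |f x - g x| ∂μ = -∫ x in sᶜ, (f x - g x) ∂μ := by
    rw [← integral_neg]
    exact setIntegral_congr_fun hs.compl fun x hx => abs_of_nonpos (sub_nonpos.2 (h_not_mem x hx))
  have h_zero : ∫ x in s, (f x - g x) ∂μ + ∫ x in sᶜ, (f x - g x) ∂μ = 0 := by
    rw [integral_add_compl (f := fun x => f x - g x) hs (hf.sub hg), integral_sub hf hg, hfg,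
      sub_self]
  rw [← integral_add_compl (f := fun x => |f x - g x|) hs (hf.sub hg).abs, h_in, h_out]
  linarith

theorem HasStrictDerivAt.tendsto_sub_div {ι : Type*} {l : Filter ι} {G : ℝ → ℝ} {K x L : ℝ}
    (hG : HasStrictDerivAt G K x) {a b δ : ι → ℝ} (ha : Tendsto a l (𝓝 x))
    (hb : Tendsto b l (𝓝 x)) (hab : Tendsto (fun i => (a i - b i) / δ i) l (𝓝 L)) :
    Tendsto (fun i => (G (a i) - G (b i)) / δ i) l (𝓝 (K * L)) := by
  have h_lin : (fun i => G (a i) - G (b i) - K * (a i - b i)) =o[l] fun i => a i - b i := by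
    have := hG.isLittleO.comp_tendsto (ha.prodMk_nhds hb)
    simpa [Function.comp_def, mul_comm] using this
  have h_err : Tendsto (fun i => (G (a i) - G (b i) - K * (a i - b i)) / δ i) l (𝓝 0) := by
    have := (h_lin.mul_isBigO (isBigO_refl (fun i => (δ i)⁻¹) l)).trans_isBigO
      (by simpa only [div_eq_mul_inv] using hab.isBigO_one ℝ)
    simpa only [div_eq_mul_inv, inv_one, mul_one] using this.tendsto_div_nhds_zero
  convert h_err.add (hab.const_mul K) using 2 <;> ring

theorem Continuous.hasStrictDerivAt_integral_neg_self {f : ℝ → ℝ} (hf : Continuous f) (r : ℝ) :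
    HasStrictDerivAt (fun r => ∫ x in -r..r, f x) (f r + f (-r)) r := by
  have h_eq : (fun r => ∫ x in -r..r, f x) = fun r => (∫ x in 0..r, f x) - ∫ x in 0..-r, f x :=
    funext fun r => (intervalIntegral.integral_interval_sub_left
      (hf.intervalIntegrable (μ := volume) _ _) (hf.intervalIntegrable _ _)).symm
  have h := (hf.integral_hasStrictDerivAt 0 r).sub
    ((hf.integral_hasStrictDerivAt 0 (-r)).comp r (hasStrictDerivAt_neg r))
  rw [mul_neg_one, sub_neg_eq_add] at h
  rwa [h_eq]

theorem gaussianDensity_eq_gaussianPDFReal {s : ℝ} (hs : 0 < s) :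
    gaussianDensity s = gaussianPDFReal 0 (s ^ 2).toNNReal := by
  ext x
  simp only [gaussianDensity, gaussianPDFReal, coe_toNNReal _ (sq_nonneg s), sub_zero]
  rw [mul_comm (2 * π), sqrt_mul (sq_nonneg s), sqrt_sq hs.le]

theorem integrable_gaussianDensity {s : ℝ} (hs : 0 < s) : Integrable (gaussianDensity s) := by
  rw [gaussianDensity_eq_gaussianPDFReal hs]
  exact integrable_gaussianPDFReal _ _

theorem integral_gaussianDensity {s : ℝ} (hs : 0 < s) : ∫ x, gaussianDensity s x = 1 := by
  rw [gaussianDensity_eq_gaussianPDFReal hs]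
  exact integral_gaussianPDFReal_eq_one _ (by positivity)

theorem continuous_gaussianDensity (s : ℝ) : Continuous (gaussianDensity s) := by
  unfold gaussianDensity
  fun_prop

theorem gaussianDensity_pos {s : ℝ} (hs : 0 < s) (x : ℝ) : 0 < gaussianDensity s x := by
  unfold gaussianDensity
  positivity

theorem gaussianDensity_neg (s x : ℝ) : gaussianDensity s (-x) = gaussianDensity s x := by
  simp only [gaussianDensity, neg_sq]

theorem gaussianDensity_eq_inv_mul_gaussianDensity_one {s : ℝ} (hs : 0 < s) (x : ℝ) :
    gaussianDensity s x = s⁻¹ * gaussianDensity 1 (x / s) := by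
  simp only [gaussianDensity, one_mul, one_pow, mul_one, div_pow, mul_inv, mul_assoc]
  congr 3
  field_simp

theorem intervalIntegral_gaussianDensity_neg_self {s : ℝ} (hs : 0 < s) (c : ℝ) :
    ∫ x in -c..c, gaussianDensity s x = ∫ u in -(c / s)..c / s, gaussianDensity 1 u := by
  simp_rw [gaussianDensity_eq_inv_mul_gaussianDensity_one hs]
  rw [intervalIntegral.integral_const_mul, intervalIntegral.integral_comp_div _ hs.ne',
    smul_eq_mul, inv_mul_cancel_left₀ hs.ne', neg_div]

noncomputable def gaussianCrossing (s t : ℝ) : ℝ :=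
  √(2 * s ^ 2 * t ^ 2 * log (t / s) / (t ^ 2 - s ^ 2))

theorem gaussianCrossing_nonneg (s t : ℝ) : 0 ≤ gaussianCrossing s t := sqrt_nonneg _

theorem gaussianCrossing_sq {s t : ℝ} (hs : 0 < s) (hst : s < t) :
    gaussianCrossing s t ^ 2 = 2 * s ^ 2 * t ^ 2 * log (t / s) / (t ^ 2 - s ^ 2) := by
  have hlog : 0 < log (t / s) := log_pos ((one_lt_div hs).2 hst)
  have hsq : 0 < t ^ 2 - s ^ 2 := by nlinarith
  exact sq_sqrt (by positivity)

theorem gaussianDensity_eq_mul_exp {s t : ℝ} (hs : 0 < s) (hst : s < t) (x : ℝ) :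
    gaussianDensity s x = gaussianDensity t x *
      exp ((t ^ 2 - s ^ 2) / (2 * s ^ 2 * t ^ 2) * (gaussianCrossing s t ^ 2 - x ^ 2)) := by
  have ht : 0 < t := hs.trans hst
  have hsq : t ^ 2 - s ^ 2 ≠ 0 := by nlinarith
  have h_exponent : (t ^ 2 - s ^ 2) / (2 * s ^ 2 * t ^ 2) * (gaussianCrossing s t ^ 2 - x ^ 2)
      = log (t / s) + (-(x ^ 2) / (2 * s ^ 2) - -(x ^ 2) / (2 * t ^ 2)) := by
    rw [gaussianCrossing_sq hs hst]
    field_simp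
    ring
  rw [h_exponent, exp_add, exp_log (div_pos ht hs), exp_sub]
  simp only [gaussianDensity]
  field_simp

theorem integral_abs_sub_gaussianDensity {s t : ℝ} (hs : 0 < s) (hst : s < t) :
    ∫ x, |gaussianDensity s x - gaussianDensity t x| =
      2 * ((∫ u in -(gaussianCrossing s t / s)..gaussianCrossing s t / s, gaussianDensity 1 u) -
        ∫ u in -(gaussianCrossing s t / t)..gaussianCrossing s t / t, gaussianDensity 1 u) := by
  have ht : 0 < t := hs.trans hst
  set c := gaussianCrossing s t
  have hc : 0 ≤ c := gaussianCrossing_nonneg s t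
  have hk : 0 < (t ^ 2 - s ^ 2) / (2 * s ^ 2 * t ^ 2) := by
    have : 0 < t ^ 2 - s ^ 2 := by nlinarith
    positivity
  have h_mem : ∀ x ∈ Set.Ioc (-c) c, gaussianDensity t x ≤ gaussianDensity s x := fun x hx => by
    rw [gaussianDensity_eq_mul_exp hs hst x]
    refine le_mul_of_one_le_right (gaussianDensity_pos ht x).le (one_le_exp ?_)
    have : x ^ 2 ≤ c ^ 2 := sq_le_sq' hx.1.le hx.2
    nlinarith
  have h_not_mem : ∀ x ∉ Set.Ioc (-c) c, gaussianDensity s x ≤ gaussianDensity t x := fun x hx => by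
    rw [gaussianDensity_eq_mul_exp hs hst x]
    refine mul_le_of_le_one_right (gaussianDensity_pos ht x).le (exp_le_one_iff.2 ?_)
    have : c ^ 2 ≤ x ^ 2 := by
      rw [Set.mem_Ioc, not_and_or, not_lt, not_le] at hx
      rcases hx with hx | hx <;> nlinarith
    nlinarith
  have h_mass : ∫ x, gaussianDensity s x = ∫ x, gaussianDensity t x := by
    rw [integral_gaussianDensity hs, integral_gaussianDensity ht]
  rw [integral_abs_sub_eq_two_mul_setIntegral measurableSet_Ioc (integrable_gaussianDensity hs)
    (integrable_gaussianDensity ht) h_mass h_mem h_not_mem, ← intervalIntegral.integral_of_le (by linarith),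
    intervalIntegral.integral_sub ((continuous_gaussianDensity s).intervalIntegrable _ _)
      ((continuous_gaussianDensity t).intervalIntegrable _ _),
    intervalIntegral_gaussianDensity_neg_self hs, intervalIntegral_gaussianDensity_neg_self ht]

theorem tendsto_gaussianCrossing {σ : ℝ} (hσ : 0 < σ) :
    Tendsto (fun δ => gaussianCrossing σ (σ + δ)) (𝓝[>] 0) (𝓝 σ) := by
  have h_slope : Tendsto (fun δ => δ⁻¹ * (log (σ + δ) - log σ)) (𝓝[>] 0) (𝓝 σ⁻¹) :=
    (hasDerivAt_log hσ.ne').tendsto_slope_zero_right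
  have h_factor : Tendsto (fun δ => 2 * σ ^ 2 * (σ + δ) ^ 2 / (2 * σ + δ)) (𝓝[>] 0)
      (𝓝 (2 * σ ^ 2 * (σ + 0) ^ 2 / (2 * σ + 0))) :=
    ((Continuous.tendsto (by fun_prop) 0).div (Continuous.tendsto (by fun_prop) 0)
      (by positivity)).mono_left nhdsWithin_le_nhds
  have h_sq : Tendsto (fun δ => gaussianCrossing σ (σ + δ) ^ 2) (𝓝[>] 0) (𝓝 (σ ^ 2)) := by
    have h := h_factor.mul h_slope
    rw [add_zero, add_zero, show 2 * σ ^ 2 * σ ^ 2 / (2 * σ) * σ⁻¹ = σ ^ 2 by field_simp] at h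
    refine h.congr' ?_
    filter_upwards [self_mem_nhdsWithin] with δ (hδ : 0 < δ)
    rw [gaussianCrossing_sq hσ (by linarith), log_div (by positivity) hσ.ne',
      show (σ + δ) ^ 2 - σ ^ 2 = δ * (2 * σ + δ) by ring]
    field_simp
  simpa only [sqrt_sq (gaussianCrossing_nonneg _ _), sqrt_sq hσ.le] using h_sq.sqrt

theorem tendsto_gaussianCrossing_div_sub_div {σ : ℝ} (hσ : 0 < σ) :
    Tendsto (fun δ => (gaussianCrossing σ (σ + δ) / σ - gaussianCrossing σ (σ + δ) / (σ + δ)) / δ)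
      (𝓝[>] 0) (𝓝 σ⁻¹) := by
  have h_shift : Tendsto (fun δ => σ * (σ + δ)) (𝓝[>] 0) (𝓝 (σ * σ)) := by
    simpa using ((by fun_prop : Continuous fun δ : ℝ => σ * (σ + δ)).tendsto 0).mono_left
      nhdsWithin_le_nhds
  have h : Tendsto (fun δ => gaussianCrossing σ (σ + δ) / (σ * (σ + δ))) (𝓝[>] 0)
      (𝓝 (σ / (σ * σ))) :=
    (tendsto_gaussianCrossing hσ).div h_shift (by positivity)
  rw [show σ / (σ * σ) = σ⁻¹ by field_simp] at h
  refine h.congr' ?_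
  filter_upwards [self_mem_nhdsWithin] with δ (hδ : 0 < δ)
  field_simp
  ring

theorem sqrt_eight_div_exp_one_mul_pi_mul_sq {σ : ℝ} (hσ : 0 < σ) :
    √(8 / (exp 1 * π * σ ^ 2)) = 4 * gaussianDensity 1 1 / σ := by
  have h_half : exp (-(1 : ℝ) ^ 2 / (2 * 1 ^ 2)) = (√(exp 1))⁻¹ := by
    rw [← exp_half, ← exp_neg]; norm_num
  rw [gaussianDensity, h_half, show (8 : ℝ) = 4 ^ 2 * 2⁻¹ by norm_num]
  rw [sqrt_div' _ (by positivity), sqrt_mul' _ (by positivity), sqrt_mul' _ (by positivity),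
    sqrt_mul (by positivity), sqrt_sq (by norm_num), sqrt_sq hσ.le, sqrt_mul (by norm_num),
    sqrt_inv]
  field_simp

/-- As `δ → 0⁺`, the L¹ distance between the densities of `N(0,σ²)` and
`N(0,(σ+δ)²)` equals `δ √(8/(eπσ²)) + o(δ)`, i.e. `δ⁻¹ ∫|g_σ − g_{σ+δ}|` tends to
`√(8/(eπσ²))`. -/
theorem variational_distance_gaussians_first_order (σ : ℝ) (hσ : 0 < σ) :
    Tendsto (fun δ : ℝ => δ⁻¹ * ∫ x : ℝ, |gaussianDensity σ x - gaussianDensity (σ + δ) x|)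
      (nhdsWithin 0 (Set.Ioi 0))
      (nhds (Real.sqrt (8 / (Real.exp 1 * π * σ ^ 2)))) := by
  have hc := tendsto_gaussianCrossing hσ
  have h_shift : Tendsto (fun δ => σ + δ) (𝓝[>] 0) (𝓝 σ) := by
    simpa using ((continuous_const_add σ).tendsto 0).mono_left nhdsWithin_le_nhds
  have ha : Tendsto (fun δ => gaussianCrossing σ (σ + δ) / σ) (𝓝[>] 0) (𝓝 1) := by
    simpa only [div_self hσ.ne'] using hc.div_const σ
  have hb : Tendsto (fun δ => gaussianCrossing σ (σ + δ) / (σ + δ)) (𝓝[>] 0) (𝓝 1) := by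
    simpa only [div_self hσ.ne', Pi.div_def] using hc.div h_shift hσ.ne'
  have hG := ((continuous_gaussianDensity 1).hasStrictDerivAt_integral_neg_self 1).tendsto_sub_div
    ha hb (tendsto_gaussianCrossing_div_sub_div hσ)
  rw [gaussianDensity_neg] at hG
  rw [sqrt_eight_div_exp_one_mul_pi_mul_sq hσ, show 4 * gaussianDensity 1 1 / σ =
    2 * ((gaussianDensity 1 1 + gaussianDensity 1 1) * σ⁻¹) by ring]
  refine (hG.const_mul 2).congr' ?_
  filter_upwards [self_mem_nhdsWithin] with δ (hδ : 0 < δ)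
  rw [integral_abs_sub_gaussianDensity hσ (by linarith)]
  ring
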